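/- arXiv:2402.00815 — 3 statements merged into one kernel-verified Lean document; each statement's English description precedes it below -/
import Mathlib

section
/- For every β > 0, the integral over ℝ³ minus the unit ball of |∇s_β|², where s_β(r) = √((β²+1)/(β²+r²)) is radial, equals (π/2)·(5β + 3β³ + 3(1+β²)²·arctan(β))/(β(1+β²)). -/
/-!
Writing `s_β(x) = g(‖x‖²)` gives `∇s_β(x) = 2 g'(‖x‖²) x`, hence
`|∇s_β|² = (β²+1) r² / (β²+r²)³` with `r = ‖x‖`. Polar coordinates turn the integral into
`4π (β²+1) ∫₁^∞ r⁴ / (β²+r²)³ dr`, and this integrand has an elementary primitive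
built from `arctan (r / β)`; finally `arctan (1/β) = π/2 - arctan β`.
-/

open MeasureTheory Real Set Filter Topology

section Gradient

variable {E : Type*} [NormedAddCommGroup E] [InnerProductSpace ℝ E] [CompleteSpace E]

theorem HasDerivAt.hasGradientAt_comp_norm_sq {g : ℝ → ℝ} {g' : ℝ} {x : E}
    (hg : HasDerivAt g g' (‖x‖ ^ 2)) :
    HasGradientAt (fun y : E => g (‖y‖ ^ 2)) ((2 * g') • x) x := by
  rw [hasGradientAt_iff_hasFDerivAt]
  refine (hg.comp_hasFDerivAt x (hasStrictFDerivAt_norm_sq x).hasFDerivAt).congr_fderiv ?_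
  ext w
  simp only [smul_apply, coe_innerSL_apply, nsmul_eq_mul, Nat.cast_ofNat, smul_eq_mul,
    map_smul, InnerProductSpace.toDual_apply_apply]
  ring

theorem norm_gradient_comp_norm_sq_sq {g : ℝ → ℝ} {g' : ℝ} {x : E}
    (hg : HasDerivAt g g' (‖x‖ ^ 2)) :
    ‖gradient (fun y : E => g (‖y‖ ^ 2)) x‖ ^ 2 = 4 * g' ^ 2 * ‖x‖ ^ 2 := by
  rw [hg.hasGradientAt_comp_norm_sq.gradient, norm_smul, mul_pow, Real.norm_eq_abs, sq_abs]
  ring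

theorem norm_gradient_sqrt_div_sq {b c : ℝ} (hb : 0 < b) (hc : 0 < c) (x : E) :
    ‖gradient (fun y : E => √(c / (b + ‖y‖ ^ 2))) x‖ ^ 2
      = c * ‖x‖ ^ 2 / (b + ‖x‖ ^ 2) ^ 3 := by
  have hq : 0 < b + ‖x‖ ^ 2 := by positivity
  have hu : HasDerivAt (fun t => c / (b + t)) (-c / (b + ‖x‖ ^ 2) ^ 2) (‖x‖ ^ 2) := by
    have := (((hasDerivAt_id _).const_add b).inv hq.ne').const_mul c
    simpa [div_eq_mul_inv] using this
  rw [norm_gradient_comp_norm_sq_sq (hu.sqrt (by positivity)), div_pow, mul_pow,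
    sq_sqrt (by positivity)]
  field_simp
  ring

end Gradient

section Polar

variable {E F : Type*} [NormedAddCommGroup E] [NormedSpace ℝ E] [Nontrivial E]
  [FiniteDimensional ℝ E] [MeasurableSpace E] [BorelSpace E]
  [NormedAddCommGroup F] [NormedSpace ℝ F]

theorem setIntegral_le_norm_fun_norm_addHaar (μ : Measure E) [μ.IsAddHaarMeasure] (f : ℝ → F)
    {a : ℝ} (ha : 0 < a) :
    ∫ x in {x : E | a ≤ ‖x‖}, f ‖x‖ ∂μ = Module.finrank ℝ E • μ.real (Metric.ball 0 1) •
      ∫ y in Ioi a, y ^ (Module.finrank ℝ E - 1) • f y := by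
  rw [← integral_indicator (measurableSet_le measurable_const measurable_norm)]
  change ∫ x, (Ici a).indicator f ‖x‖ ∂μ = _
  rw [integral_fun_norm_addHaar]
  simp_rw [← indicator_smul, integral_indicator measurableSet_Ici,
    Measure.restrict_restrict measurableSet_Ici, inter_eq_left.mpr (Ici_subset_Ioi.mpr ha),
    integral_Ici_eq_integral_Ioi]

end Polar

noncomputable def radialPrimitive (β r : ℝ) : ℝ :=
  3 / (8 * β) * arctan (r / β) - 5 / 8 * (r / (β ^ 2 + r ^ 2)) +
    β ^ 2 / 4 * (r / (β ^ 2 + r ^ 2) ^ 2)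

theorem hasDerivAt_radialPrimitive {β : ℝ} (hβ : β ≠ 0) (r : ℝ) :
    HasDerivAt (radialPrimitive β) (r ^ 4 / (β ^ 2 + r ^ 2) ^ 3) r := by
  have hq : β ^ 2 + r ^ 2 ≠ 0 := by positivity
  have hsq : HasDerivAt (fun r : ℝ => β ^ 2 + r ^ 2) (2 * r) r := by
    simpa using ((hasDerivAt_id r).pow 2).const_add (β ^ 2)
  have harctan := ((hasDerivAt_id r).div_const β).arctan
  have h1 := (hasDerivAt_id r).div hsq hq
  have h2 := (hasDerivAt_id r).div (hsq.pow 2) (pow_ne_zero 2 hq)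
  refine (((harctan.const_mul _).sub (h1.const_mul _)).add (h2.const_mul _)).congr_deriv ?_
  simp only [id, Pi.pow_apply]
  field_simp
  ring

theorem tendsto_div_sq_add_sq_atTop (β : ℝ) :
    Tendsto (fun r : ℝ => r / (β ^ 2 + r ^ 2)) atTop (𝓝 0) := by
  refine squeeze_zero' ?_ ?_ tendsto_inv_atTop_zero
  · filter_upwards [eventually_ge_atTop 0] with r hr using by positivity
  · filter_upwards [eventually_gt_atTop 0] with r hr
    calc r / (β ^ 2 + r ^ 2) ≤ r / r ^ 2 := by gcongr; nlinarith
      _ = r⁻¹ := by field_simp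

theorem tendsto_radialPrimitive_atTop {β : ℝ} (hβ : 0 < β) :
    Tendsto (radialPrimitive β) atTop (𝓝 (3 * π / (16 * β))) := by
  have harctan : Tendsto (fun r => arctan (r / β)) atTop (𝓝 (π / 2)) :=
    (tendsto_arctan_atTop.mono_right nhdsWithin_le_nhds).comp (tendsto_id.atTop_div_const hβ)
  have hinv : Tendsto (fun r : ℝ => (β ^ 2 + r ^ 2)⁻¹) atTop (𝓝 0) :=
    tendsto_inv_atTop_zero.comp (tendsto_atTop_add_const_left _ _ (tendsto_pow_atTop two_ne_zero))
  have h1 := tendsto_div_sq_add_sq_atTop β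
  have h2 : Tendsto (fun r : ℝ => r / (β ^ 2 + r ^ 2) ^ 2) atTop (𝓝 0) := by
    simpa [div_eq_mul_inv, pow_two, mul_assoc] using h1.mul hinv
  rw [show 3 * π / (16 * β) = 3 / (8 * β) * (π / 2) - 5 / 8 * 0 + β ^ 2 / 4 * 0 by ring]
  exact ((harctan.const_mul _).sub (h1.const_mul _)).add (h2.const_mul _)

theorem integral_Ioi_pow_four_div_sq_add_sq_pow_three {β : ℝ} (hβ : 0 < β) (a : ℝ) :
    ∫ r in Ioi a, r ^ 4 / (β ^ 2 + r ^ 2) ^ 3 = 3 * π / (16 * β) - radialPrimitive β a :=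
  integral_Ioi_of_hasDerivAt_of_nonneg' (fun r _ => hasDerivAt_radialPrimitive hβ.ne' r)
    (fun r _ => by positivity) (tendsto_radialPrimitive_atTop hβ)

/-- For every β > 0, the integral over ℝ³ minus the unit ball of `|∇s_β|²`,
where `s_β(x) = √((β²+1)/(β²+|x|²))`, equals
`(π/2)·(5β + 3β³ + 3(1+β²)²·arctan β)/(β(1+β²))`. -/
theorem stmt0 (β : ℝ) (hβ : 0 < β) :
    (∫ x in {x : EuclideanSpace ℝ (Fin 3) | 1 ≤ ‖x‖},
      ‖gradient (fun y : EuclideanSpace ℝ (Fin 3) =>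
        Real.sqrt ((β ^ 2 + 1) / (β ^ 2 + ‖y‖ ^ 2))) x‖ ^ 2) =
      (π / 2) * ((5 * β + 3 * β ^ 3 + 3 * (1 + β ^ 2) ^ 2 * Real.arctan β) /
        (β * (1 + β ^ 2))) := by
  simp_rw [norm_gradient_sqrt_div_sq (sq_pos_of_pos hβ) (by positivity : (0 : ℝ) < β ^ 2 + 1)]
  rw [setIntegral_le_norm_fun_norm_addHaar volume
    (fun r => (β ^ 2 + 1) * r ^ 2 / (β ^ 2 + r ^ 2) ^ 3) one_pos]
  have hradial : ∫ r in Ioi (1 : ℝ), r ^ (3 - 1) • ((β ^ 2 + 1) * r ^ 2 / (β ^ 2 + r ^ 2) ^ 3)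
      = (β ^ 2 + 1) * (3 * π / (16 * β) - radialPrimitive β 1) := by
    rw [← integral_Ioi_pow_four_div_sq_add_sq_pow_three hβ, ← integral_const_mul]
    congr 1 with r
    rw [smul_eq_mul]
    ring
  rw [finrank_euclideanSpace_fin, measureReal_def, EuclideanSpace.volume_ball_fin_three, hradial,
    radialPrimitive, one_div, arctan_inv_of_pos hβ]
  simp only [ENNReal.ofReal_one, one_pow, one_mul,
    ENNReal.toReal_ofReal (by positivity : 0 ≤ π * 4 / 3), smul_eq_mul, nsmul_eq_mul]
  field_simp
  ring
end

section
/- As β → ∞, the ratio (∫_{ℝ³∖B₁} |∇s_β|² dx) / (∫_{ℝ³∖B₁} s_β⁶ dx)^{1/3} equals Λ + (2^{8/3} π^{1/3}/3)·β^{−3} + O(β^{−4}), where Λ = 3(π/2)^{4/3}. -/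
/-!
Put u = 1/β. Radial integration and explicit antiderivatives turn the two integrals into
β f(u) and β³ g(u), where f = `gradProfile` and g = `sixthPowerProfile` are continuous at
u = 0; the quotient is then f(u) / g(u)^(1/3). The expansion arctan u = u - u³/3 + O(u⁵) gives
f = (3π²/4)(1 + u²) + O(u⁵) and g = (π²/4)(1 + u²)³ - (4π/3)u³ + O(u⁵). For X = Λ + c u³ the
u³ terms of f³ - X³ g cancel, so f³ - X³ g = O(u⁵), and since
a - s = (a³ - s³) / (a² + a s + s²), also f / g^(1/3) - X = O(u⁵).
-/

open MeasureTheory Real Filter Asymptotics Set Topology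

lemma integral_compl_ball_comp_norm (G : ℝ → ℝ) :
    ∫ x in {x : EuclideanSpace ℝ (Fin 3) | 1 ≤ ‖x‖}, G ‖x‖
      = 4 * π * ∫ r in Ioi (1 : ℝ), r ^ 2 * G r := by
  have hset : {x : EuclideanSpace ℝ (Fin 3) | 1 ≤ ‖x‖} = norm ⁻¹' Ici 1 := rfl
  have hshell : Ioi (0 : ℝ) ∩ Ici 1 = Ici 1 :=
    inter_eq_right.2 fun r hr => lt_of_lt_of_le one_pos (mem_Ici.1 hr)
  rw [hset, ← integral_indicator (measurableSet_Ici.preimage continuous_norm.measurable),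
    show (norm ⁻¹' Ici 1).indicator (fun x : EuclideanSpace ℝ (Fin 3) => G ‖x‖)
      = fun x => (Ici 1).indicator G ‖x‖ from funext fun _ => indicator_comp_right _,
    integral_fun_norm_addHaar, finrank_euclideanSpace_fin, measureReal_def,
    EuclideanSpace.volume_ball_fin_three]
  simp_rw [smul_eq_mul]
  rw [show (fun y : ℝ => y ^ (3 - 1) * (Ici 1).indicator G y)
      = (Ici 1).indicator (fun y => y ^ (3 - 1) * G y) from
        funext fun _ => (indicator_mul_right (Ici 1) (fun y : ℝ => y ^ (3 - 1)) G).symm,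
    setIntegral_indicator measurableSet_Ici, hshell, integral_Ici_eq_integral_Ioi,
    ENNReal.ofReal_one, one_pow, one_mul, ENNReal.toReal_ofReal (by positivity), nsmul_eq_mul]
  norm_num
  ring

lemma norm_gradient_comp_norm_sq {E : Type*} [NormedAddCommGroup E] [InnerProductSpace ℝ E]
    [CompleteSpace E] {φ : ℝ → ℝ} {φ' : ℝ} {x : E} (h : HasDerivAt φ φ' (‖x‖ ^ 2)) :
    ‖gradient (fun y => φ (‖y‖ ^ 2)) x‖ = 2 * |φ'| * ‖x‖ := by
  have hfd : HasFDerivAt (fun y : E => φ (‖y‖ ^ 2)) (φ' • (2 • innerSL ℝ x)) x :=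
    h.comp_hasFDerivAt x (hasStrictFDerivAt_norm_sq x).hasFDerivAt
  rw [gradient, LinearIsometryEquiv.norm_map, hfd.fderiv, norm_smul, two_nsmul, ← two_smul ℝ,
    norm_smul, innerSL_apply_norm]
  simp only [norm_eq_abs]
  ring

section Antiderivatives

variable {b : ℝ}

lemma hasDerivAt_arctan_div (hb : b ≠ 0) (s : ℝ) :
    HasDerivAt (fun s => arctan (s / b)) (b / (b ^ 2 + s ^ 2)) s := by
  refine ((hasDerivAt_arctan (s / b)).comp s ((hasDerivAt_id s).div_const b)).congr_deriv ?_
  field_simp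

lemma hasDerivAt_div_sq_add_sq (hb : b ≠ 0) (s : ℝ) :
    HasDerivAt (fun s => s / (b ^ 2 + s ^ 2)) ((b ^ 2 - s ^ 2) / (b ^ 2 + s ^ 2) ^ 2) s := by
  have hden : b ^ 2 + s ^ 2 ≠ 0 := by positivity
  refine ((hasDerivAt_id s).div ((hasDerivAt_pow 2 s).const_add (b ^ 2)) hden).congr_deriv ?_
  simp only [id]
  field_simp
  ring

lemma hasDerivAt_div_sq_add_sq_sq (hb : b ≠ 0) (s : ℝ) :
    HasDerivAt (fun s => s / (b ^ 2 + s ^ 2) ^ 2)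
      ((b ^ 2 - 3 * s ^ 2) / (b ^ 2 + s ^ 2) ^ 3) s := by
  have hden : b ^ 2 + s ^ 2 ≠ 0 := by positivity
  refine ((hasDerivAt_id s).div (((hasDerivAt_pow 2 s).const_add (b ^ 2)).pow 2)
    (pow_ne_zero 2 hden)).congr_deriv ?_
  simp only [id, Pi.pow_apply]
  field_simp
  ring

lemma tendsto_div_sq_add_sq_pow_atTop (b : ℝ) {n : ℕ} (hn : n ≠ 0) :
    Tendsto (fun s => s / (b ^ 2 + s ^ 2) ^ n) atTop (𝓝 0) := by
  refine tendsto_of_tendsto_of_tendsto_of_le_of_le' tendsto_const_nhds tendsto_inv_atTop_zero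
    ?_ ?_
  all_goals filter_upwards [eventually_ge_atTop 1] with s hs
  · positivity
  · have hpow : s ^ 2 ≤ (b ^ 2 + s ^ 2) ^ n :=
      (le_add_of_nonneg_left (sq_nonneg b)).trans
        (le_self_pow₀ (by nlinarith [sq_nonneg b]) hn)
    rw [div_le_iff₀ (by positivity)]
    calc s = s⁻¹ * s ^ 2 := by field_simp
      _ ≤ s⁻¹ * (b ^ 2 + s ^ 2) ^ n := by gcongr

lemma tendsto_arctan_div_atTop (hb : 0 < b) :
    Tendsto (fun s => arctan (s / b)) atTop (𝓝 (π / 2)) :=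
  (tendsto_nhds_of_tendsto_nhdsWithin tendsto_arctan_atTop).comp
    (tendsto_id.atTop_div_const hb)

lemma integral_Ioi_pow_four_div_sq_add_sq_cube (hb : 0 < b) (a : ℝ) :
    ∫ r in Ioi a, r ^ 4 / (b ^ 2 + r ^ 2) ^ 3
      = 3 / (8 * b) * (π / 2 - arctan (a / b)) + 5 / 8 * (a / (b ^ 2 + a ^ 2))
        - b ^ 2 / 4 * (a / (b ^ 2 + a ^ 2) ^ 2) := by
  have hderiv : ∀ r : ℝ, HasDerivAt
      (fun s => 3 / (8 * b) * arctan (s / b) - 5 / 8 * (s / (b ^ 2 + s ^ 2))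
        + b ^ 2 / 4 * (s / (b ^ 2 + s ^ 2) ^ 2)) (r ^ 4 / (b ^ 2 + r ^ 2) ^ 3) r := by
    intro r
    have hden : b ^ 2 + r ^ 2 ≠ 0 := by positivity
    refine ((((hasDerivAt_arctan_div hb.ne' r).const_mul (3 / (8 * b))).sub
      ((hasDerivAt_div_sq_add_sq hb.ne' r).const_mul (5 / 8))).add
      ((hasDerivAt_div_sq_add_sq_sq hb.ne' r).const_mul (b ^ 2 / 4))).congr_deriv ?_
    field_simp
    ring
  have hlim := (((tendsto_arctan_div_atTop hb).const_mul (3 / (8 * b))).sub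
    ((tendsto_div_sq_add_sq_pow_atTop b one_ne_zero).const_mul (5 / 8))).add
    ((tendsto_div_sq_add_sq_pow_atTop b two_ne_zero).const_mul (b ^ 2 / 4))
  simp only [pow_one, mul_zero, sub_zero, add_zero] at hlim
  rw [integral_Ioi_of_hasDerivAt_of_nonneg' (fun r _ => hderiv r) (fun r _ => by positivity) hlim]
  ring

lemma integral_Ioi_sq_div_sq_add_sq_cube (hb : 0 < b) (a : ℝ) :
    ∫ r in Ioi a, r ^ 2 / (b ^ 2 + r ^ 2) ^ 3
      = 1 / (8 * b ^ 3) * (π / 2 - arctan (a / b)) - 1 / (8 * b ^ 2) * (a / (b ^ 2 + a ^ 2))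
        + 1 / 4 * (a / (b ^ 2 + a ^ 2) ^ 2) := by
  have hderiv : ∀ r : ℝ, HasDerivAt
      (fun s => 1 / (8 * b ^ 3) * arctan (s / b) + 1 / (8 * b ^ 2) * (s / (b ^ 2 + s ^ 2))
        - 1 / 4 * (s / (b ^ 2 + s ^ 2) ^ 2)) (r ^ 2 / (b ^ 2 + r ^ 2) ^ 3) r := by
    intro r
    have hden : b ^ 2 + r ^ 2 ≠ 0 := by positivity
    refine ((((hasDerivAt_arctan_div hb.ne' r).const_mul (1 / (8 * b ^ 3))).add
      ((hasDerivAt_div_sq_add_sq hb.ne' r).const_mul (1 / (8 * b ^ 2)))).sub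
      ((hasDerivAt_div_sq_add_sq_sq hb.ne' r).const_mul (1 / 4))).congr_deriv ?_
    field_simp
    ring
  have hlim := (((tendsto_arctan_div_atTop hb).const_mul (1 / (8 * b ^ 3))).add
    ((tendsto_div_sq_add_sq_pow_atTop b one_ne_zero).const_mul (1 / (8 * b ^ 2)))).sub
    ((tendsto_div_sq_add_sq_pow_atTop b two_ne_zero).const_mul (1 / 4))
  simp only [pow_one, mul_zero, sub_zero, add_zero] at hlim
  rw [integral_Ioi_of_hasDerivAt_of_nonneg' (fun r _ => hderiv r) (fun r _ => by positivity) hlim]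
  ring

end Antiderivatives

lemma hasDerivAt_sqrt_div_add {k c t : ℝ} (hk : 0 < k) (ht : 0 < c + t) :
    HasDerivAt (fun t => √(k / (c + t))) (-√(k / (c + t)) / (2 * (c + t))) t := by
  have hq : HasDerivAt (fun t => k / (c + t)) (-k / (c + t) ^ 2) t := by
    refine (((hasDerivAt_id t).const_add c).inv ht.ne').const_mul k |>.congr_deriv ?_
    simp only [id]
    field_simp
  refine (hq.sqrt (by positivity)).congr_deriv ?_
  have hs : √(k / (c + t)) ≠ 0 := (Real.sqrt_pos.2 (by positivity)).ne'
  field_simp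
  rw [Real.sq_sqrt (by positivity)]
  field_simp

lemma norm_gradient_sq_sqrt_div {β : ℝ} (hβ : β ≠ 0) (x : EuclideanSpace ℝ (Fin 3)) :
    ‖gradient (fun y : EuclideanSpace ℝ (Fin 3) => √((β ^ 2 + 1) / (β ^ 2 + ‖y‖ ^ 2))) x‖ ^ 2
      = (β ^ 2 + 1) * ‖x‖ ^ 2 / (β ^ 2 + ‖x‖ ^ 2) ^ 3 := by
  have hc : 0 < β ^ 2 + ‖x‖ ^ 2 := by positivity
  rw [norm_gradient_comp_norm_sq (hasDerivAt_sqrt_div_add (by positivity) hc), mul_pow, mul_pow,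
    sq_abs, div_pow, neg_sq, Real.sq_sqrt (by positivity)]
  field_simp

-- With u = 1/β, these are the paper's closed forms divided by β and β³
-- (using π/2 - arctan u = arctan β).
noncomputable def gradProfile (u : ℝ) : ℝ :=
  π / 2 * (3 * u + 5 * u ^ 3 + 3 * (1 + u ^ 2) ^ 2 * (π / 2 - arctan u)) / (1 + u ^ 2)

noncomputable def sixthPowerProfile (u : ℝ) : ℝ :=
  π / 2 * (u - u ^ 5 + (1 + u ^ 2) ^ 3 * (π / 2 - arctan u))

lemma integral_norm_gradient_sq_sqrt_div {β : ℝ} (hβ : 0 < β) :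
    ∫ x in {x : EuclideanSpace ℝ (Fin 3) | 1 ≤ ‖x‖},
        ‖gradient (fun y : EuclideanSpace ℝ (Fin 3) => √((β ^ 2 + 1) / (β ^ 2 + ‖y‖ ^ 2))) x‖ ^ 2
      = β * gradProfile β⁻¹ := by
  simp_rw [norm_gradient_sq_sqrt_div hβ.ne']
  rw [integral_compl_ball_comp_norm (fun r => (β ^ 2 + 1) * r ^ 2 / (β ^ 2 + r ^ 2) ^ 3)]
  simp_rw [show ∀ r : ℝ, r ^ 2 * ((β ^ 2 + 1) * r ^ 2 / (β ^ 2 + r ^ 2) ^ 3)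
      = (β ^ 2 + 1) * (r ^ 4 / (β ^ 2 + r ^ 2) ^ 3) from fun r => by ring]
  rw [integral_const_mul, integral_Ioi_pow_four_div_sq_add_sq_cube hβ, one_div, gradProfile]
  field_simp
  ring

lemma integral_sqrt_div_pow_six {β : ℝ} (hβ : 0 < β) :
    ∫ x in {x : EuclideanSpace ℝ (Fin 3) | 1 ≤ ‖x‖}, √((β ^ 2 + 1) / (β ^ 2 + ‖x‖ ^ 2)) ^ 6
      = β ^ 3 * sixthPowerProfile β⁻¹ := by
  simp_rw [show ∀ x : EuclideanSpace ℝ (Fin 3), √((β ^ 2 + 1) / (β ^ 2 + ‖x‖ ^ 2)) ^ 6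
      = (β ^ 2 + 1) ^ 3 / (β ^ 2 + ‖x‖ ^ 2) ^ 3 from fun x => by
    rw [show 6 = 2 * 3 from rfl, pow_mul, Real.sq_sqrt (by positivity), div_pow]]
  rw [integral_compl_ball_comp_norm (fun r => (β ^ 2 + 1) ^ 3 / (β ^ 2 + r ^ 2) ^ 3)]
  simp_rw [show ∀ r : ℝ, r ^ 2 * ((β ^ 2 + 1) ^ 3 / (β ^ 2 + r ^ 2) ^ 3)
      = (β ^ 2 + 1) ^ 3 * (r ^ 2 / (β ^ 2 + r ^ 2) ^ 3) from fun r => by ring]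
  rw [integral_const_mul, integral_Ioi_sq_div_sq_add_sq_cube hβ, one_div, sixthPowerProfile]
  field_simp
  ring

lemma abs_arctan_sub_taylor_le (u : ℝ) : |arctan u - (u - u ^ 3 / 3)| ≤ |u| ^ 5 / 5 := by
  set h : ℝ → ℝ := fun u => arctan u - (u - u ^ 3 / 3)
  have hderiv : ∀ x, HasDerivAt h (x ^ 4 / (1 + x ^ 2)) x := fun x =>
    ((hasDerivAt_arctan x).sub ((hasDerivAt_id x).sub ((hasDerivAt_pow 3 x).div_const 3)))
      |>.congr_deriv (by field_simp; ring)
  have hderiv' : ∀ x, HasDerivAt (fun u => u ^ 5 / 5 - h u) (x ^ 6 / (1 + x ^ 2)) x := fun x =>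
    ((hasDerivAt_pow 5 x).div_const 5).sub (hderiv x) |>.congr_deriv (by field_simp; ring)
  have hmono : Monotone h := monotone_of_deriv_nonneg (fun x => (hderiv x).differentiableAt)
    fun x => (hderiv x).deriv ▸ by positivity
  have hmono' : Monotone (fun u => u ^ 5 / 5 - h u) :=
    monotone_of_deriv_nonneg (fun x => (hderiv' x).differentiableAt)
      fun x => (hderiv' x).deriv ▸ by positivity
  have h0 : h 0 = 0 := by simp [h]
  change |h u| ≤ _
  rcases le_total 0 u with hu | hu
  · have h1 := hmono hu
    have h2 := hmono' hu
    simp only [h0] at h1 h2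
    rw [abs_of_nonneg h1, abs_of_nonneg hu]
    linarith
  · have h1 := hmono hu
    have h2 := hmono' hu
    simp only [h0] at h1 h2
    rw [abs_of_nonpos h1, abs_of_nonpos hu]
    linarith [Odd.neg_pow (by decide : Odd 5) u]

lemma arctan_sub_taylor_isBigO :
    (fun u => arctan u - (u - u ^ 3 / 3)) =O[𝓝 0] fun u => u ^ 5 :=
  IsBigO.of_bound (1 / 5) <| Eventually.of_forall fun u => by
    simpa [abs_pow, div_eq_inv_mul] using abs_arctan_sub_taylor_le u

lemma ContinuousAt.mul_isBigO {α : Type*} [TopologicalSpace α] {x : α} {c f g : α → ℝ}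
    (hc : ContinuousAt c x) (hf : f =O[𝓝 x] g) : (fun y => c y * f y) =O[𝓝 x] g := by
  simpa using hc.isBigO.mul hf

lemma gradProfile_sub_isBigO :
    (fun u => gradProfile u - 3 * π ^ 2 / 4 * (1 + u ^ 2)) =O[𝓝 0] fun u => u ^ 5 := by
  have heq : ∀ u, gradProfile u - 3 * π ^ 2 / 4 * (1 + u ^ 2)
      = -(3 * π / 2 * (1 + u ^ 2)) * (arctan u - (u - u ^ 3 / 3))
        + -(π / 2 * (1 - u ^ 2) / (1 + u ^ 2)) * u ^ 5 := fun u => by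
    rw [gradProfile]
    field_simp
    ring
  simp_rw [heq]
  exact (ContinuousAt.mul_isBigO (by fun_prop) arctan_sub_taylor_isBigO).add
    (ContinuousAt.mul_isBigO (by fun_prop (disch := positivity)) (isBigO_refl _ _))

lemma sixthPowerProfile_sub_isBigO :
    (fun u => sixthPowerProfile u - (π ^ 2 / 4 * (1 + u ^ 2) ^ 3 - 4 * π / 3 * u ^ 3))
      =O[𝓝 0] fun u => u ^ 5 := by
  have heq : ∀ u, sixthPowerProfile u - (π ^ 2 / 4 * (1 + u ^ 2) ^ 3 - 4 * π / 3 * u ^ 3)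
      = -(π / 2 * (1 + u ^ 2) ^ 3) * (arctan u - (u - u ^ 3 / 3))
        + π / 2 * (u ^ 4 / 3 - 3) * u ^ 5 := fun u => by
    rw [sixthPowerProfile]
    ring
  simp_rw [heq]
  exact (ContinuousAt.mul_isBigO (by fun_prop) arctan_sub_taylor_isBigO).add
    (ContinuousAt.mul_isBigO (by fun_prop) (isBigO_refl _ _))

lemma rpow_one_third_pow_three {x : ℝ} (hx : 0 ≤ x) : (x ^ ((1 : ℝ) / 3)) ^ 3 = x := by
  simpa using rpow_inv_natCast_pow hx (n := 3) (by norm_num)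

lemma pow_three_rpow_one_third {x : ℝ} (hx : 0 ≤ x) : (x ^ 3) ^ ((1 : ℝ) / 3) = x := by
  simpa using pow_rpow_inv_natCast hx (n := 3) (by norm_num)

lemma sobolevConstant_eq :
    3 * (π / 2) ^ ((4 : ℝ) / 3) = 3 * π / 2 * (π / 2) ^ ((1 : ℝ) / 3) := by
  rw [show (4 : ℝ) / 3 = 1 + 1 / 3 by norm_num, rpow_add (by positivity), rpow_one]
  ring

lemma cubicCoeff_eq :
    2 ^ ((8 : ℝ) / 3) * π ^ ((1 : ℝ) / 3) / 3 = 8 / 3 * (π / 2) ^ ((1 : ℝ) / 3) := by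
  rw [div_rpow pi_pos.le zero_le_two, show (8 : ℝ) / 3 = 3 - 1 / 3 by norm_num,
    rpow_sub zero_lt_two]
  norm_num
  ring

lemma abs_sub_le_of_pow_three {a s : ℝ} (ha : a ≠ 0) :
    |a - s| ≤ 4 / 3 * |a ^ 3 - s ^ 3| / a ^ 2 := by
  have hq : 3 / 4 * a ^ 2 ≤ a ^ 2 + a * s + s ^ 2 := by nlinarith [sq_nonneg (s + a / 2)]
  have ha2 : 0 < a ^ 2 := by positivity
  rw [show a ^ 3 - s ^ 3 = (a - s) * (a ^ 2 + a * s + s ^ 2) by ring, abs_mul,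
    abs_of_pos (a := a ^ 2 + a * s + s ^ 2) (by linarith), le_div_iff₀ ha2]
  nlinarith [abs_nonneg (a - s)]

@[fun_prop]
lemma continuous_gradProfile : Continuous gradProfile := by
  unfold gradProfile
  exact Continuous.div (by fun_prop) (by fun_prop) fun u => by positivity

@[fun_prop]
lemma continuous_sixthPowerProfile : Continuous sixthPowerProfile := by
  unfold sixthPowerProfile
  fun_prop

lemma eventually_gradProfile_pos : ∀ᶠ u in 𝓝 0, 0 < gradProfile u :=
  continuousAt_const.eventually_lt continuous_gradProfile.continuousAt (by
    norm_num [gradProfile]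
    positivity)

lemma eventually_sixthPowerProfile_pos : ∀ᶠ u in 𝓝 0, 0 < sixthPowerProfile u :=
  continuousAt_const.eventually_lt continuous_sixthPowerProfile.continuousAt (by
    norm_num [sixthPowerProfile])

lemma gradProfile_cube_sub_isBigO :
    (fun u => gradProfile u ^ 3 - π / 2 * (3 * π / 2 + 8 / 3 * u ^ 3) ^ 3 * sixthPowerProfile u)
      =O[𝓝 0] fun u => u ^ 5 := by
  -- The last summand is the difference of the leading terms, in which the u³ terms cancel:
  -- this is where the coefficient 8/3 (that is, c = 2^(8/3) π^(1/3) / 3) comes from.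
  have heq : ∀ u, gradProfile u ^ 3 - π / 2 * (3 * π / 2 + 8 / 3 * u ^ 3) ^ 3 * sixthPowerProfile u
      = (gradProfile u ^ 2 + gradProfile u * (3 * π ^ 2 / 4 * (1 + u ^ 2))
            + (3 * π ^ 2 / 4 * (1 + u ^ 2)) ^ 2) * (gradProfile u - 3 * π ^ 2 / 4 * (1 + u ^ 2))
        + -(π / 2 * (3 * π / 2 + 8 / 3 * u ^ 3) ^ 3)
          * (sixthPowerProfile u - (π ^ 2 / 4 * (1 + u ^ 2) ^ 3 - 4 * π / 3 * u ^ 3))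
        + (-(9 * π ^ 5 / 4) * (3 + 3 * u ^ 2 + u ^ 4) + 4 * π ^ 4 * u * (3 - (1 + u ^ 2) ^ 3)
          + 64 * π ^ 3 / 27 * u ^ 4 * (9 - (1 + u ^ 2) ^ 3) + 1024 * π ^ 2 / 81 * u ^ 7)
          * u ^ 5 :=
    fun u => by ring
  simp_rw [heq]
  exact ((ContinuousAt.mul_isBigO (by fun_prop) gradProfile_sub_isBigO).add
    (ContinuousAt.mul_isBigO (by fun_prop) sixthPowerProfile_sub_isBigO)).add
    (ContinuousAt.mul_isBigO (by fun_prop) (isBigO_refl _ _))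

lemma gradProfile_div_rpow_sub_isBigO :
    (fun u => gradProfile u / sixthPowerProfile u ^ ((1 : ℝ) / 3)
      - (3 * (π / 2) ^ ((4 : ℝ) / 3) + 2 ^ ((8 : ℝ) / 3) * π ^ ((1 : ℝ) / 3) / 3 * u ^ 3))
      =O[𝓝 0] fun u => u ^ 5 := by
  simp_rw [sobolevConstant_eq, cubicCoeff_eq]
  set t := (π / 2) ^ ((1 : ℝ) / 3)
  have ht3 : t ^ 3 = π / 2 := rpow_one_third_pow_three (by positivity)
  have hinv : (fun u => (gradProfile u ^ 2 * sixthPowerProfile u ^ ((1 : ℝ) / 3))⁻¹)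
      =O[𝓝 0] fun _ => (1 : ℝ) := by
    have hf0 := eventually_gradProfile_pos.self_of_nhds
    have hg0 := eventually_sixthPowerProfile_pos.self_of_nhds
    exact ContinuousAt.isBigO (((continuous_gradProfile.continuousAt.pow 2).mul
      (continuous_sixthPowerProfile.continuousAt.rpow_const (Or.inl hg0.ne'))).inv₀
      (mul_pos (pow_pos hf0 2) (rpow_pos_of_pos hg0 _)).ne')
  refine (IsBigO.of_bound (4 / 3) ?_).trans ((gradProfile_cube_sub_isBigO.mul hinv).congr_right
    fun u => mul_one _)
  filter_upwards [eventually_gradProfile_pos, eventually_sixthPowerProfile_pos] with u hf hg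
  set y := sixthPowerProfile u ^ ((1 : ℝ) / 3)
  have hy : 0 < y := rpow_pos_of_pos hg _
  have hy3 : y ^ 3 = sixthPowerProfile u := rpow_one_third_pow_three hg.le
  have hs3 : ((3 * π / 2 * t + 8 / 3 * t * u ^ 3) * y) ^ 3
      = π / 2 * (3 * π / 2 + 8 / 3 * u ^ 3) ^ 3 * sixthPowerProfile u := by
    rw [← hy3, ← ht3]
    ring
  rw [Real.norm_eq_abs, Real.norm_eq_abs,
    show gradProfile u / y - (3 * π / 2 * t + 8 / 3 * t * u ^ 3)
      = (gradProfile u - (3 * π / 2 * t + 8 / 3 * t * u ^ 3) * y) / y by field_simp,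
    abs_div, abs_of_pos hy, abs_mul, abs_inv, abs_of_pos (mul_pos (pow_pos hf 2) hy), ← hs3]
  calc _ ≤ 4 / 3 * |gradProfile u ^ 3 - ((3 * π / 2 * t + 8 / 3 * t * u ^ 3) * y) ^ 3|
        / gradProfile u ^ 2 / y := by gcongr; exact abs_sub_le_of_pow_three hf.ne'
    _ = _ := by field_simp

/-- As β → ∞, the Sobolev quotient of `s_β` on ℝ³ ∖ B₁ equals
`Λ + (2^{8/3} π^{1/3}/3) β⁻³ + O(β⁻⁴)` where `Λ = 3(π/2)^{4/3}`. -/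
theorem stmt2 :
    (fun β : ℝ =>
      (∫ x in {x : EuclideanSpace ℝ (Fin 3) | 1 ≤ ‖x‖},
          ‖gradient (fun y : EuclideanSpace ℝ (Fin 3) =>
            Real.sqrt ((β ^ 2 + 1) / (β ^ 2 + ‖y‖ ^ 2))) x‖ ^ 2) /
        (∫ x in {x : EuclideanSpace ℝ (Fin 3) | 1 ≤ ‖x‖},
          (Real.sqrt ((β ^ 2 + 1) / (β ^ 2 + ‖x‖ ^ 2))) ^ 6) ^ ((1 : ℝ) / 3)
      - (3 * (π / 2) ^ ((4 : ℝ) / 3)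
          + (2 ^ ((8 : ℝ) / 3) * π ^ ((1 : ℝ) / 3) / 3) * β ^ (-3 : ℤ)))
      =O[atTop] fun β : ℝ => β ^ (-4 : ℤ) := by
  have hu := tendsto_inv_atTop_zero (𝕜 := ℝ)
  refine ((gradProfile_div_rpow_sub_isBigO.trans (isLittleO_pow_pow (by norm_num : 4 < 5)).isBigO)
    |>.comp_tendsto hu).congr' ?_ (Eventually.of_forall fun β => by simp [zpow_neg])
  filter_upwards [eventually_gt_atTop 0, hu.eventually eventually_sixthPowerProfile_pos]
    with β hβ hg
  rw [Function.comp_apply, integral_norm_gradient_sq_sqrt_div hβ, integral_sqrt_div_pow_six hβ,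
    mul_rpow (by positivity) hg.le, pow_three_rpow_one_third hβ.le, mul_div_mul_left _ _ hβ.ne',
    zpow_neg, zpow_ofNat, inv_pow]
end

section
/- Let I : (0,∞) → (0,∞) be a continuous increasing function whose left derivative I'₋ exists everywhere and satisfies I'₋(v) > (1 − 2ε)√(16π/I(v)) for all v > 0, where 0 ≤ ε < 1/2. Suppose additionally that I(v) > (1 − 2ε)^{2/3}(36π)^{1/3} v^{2/3} for all sufficiently small v > 0. Then I(v) ≥ (1 − 2ε)^{2/3}(36π)^{1/3} v^{2/3} for all v > 0. -/
/-!
With `c = 1 - 2ε`, the Euclidean-type profile `c^{2/3} (36π)^{1/3} v^{2/3}` equals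
`(6 c √π v)^{2/3}`, so the claim is that `F v = I(v)^{3/2} - 6 c √π v` is nonnegative.
The derivative bound says exactly that the left derivative `(3/2) √I · I'₋` of `I^{3/2}`
exceeds `6 c √π`, so `F` has positive left derivative. Since `F > 0` near `0`, at a first
point where `F ≤ 0` the function would already be negative just to its left, a contradiction.
-/

open Real Set Filter Topology

theorem HasDerivWithinAt.eventually_lt_of_Iic_of_pos {f : ℝ → ℝ} {f' x : ℝ}
    (hf : HasDerivWithinAt f f' (Iic x) x) (hf' : 0 < f') : ∀ᶠ y in 𝓝[<] x, f y < f x := by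
  rw [hasDerivWithinAt_iff_tendsto_slope, Iic_sdiff_right] at hf
  filter_upwards [hf.eventually (lt_mem_nhds hf'), self_mem_nhdsWithin] with y hslope hy
  rwa [slope_comm, slope_def_field, div_pos_iff_of_pos_right (sub_pos.2 hy), sub_pos] at hslope

theorem pos_of_forall_eventually_nhdsLT_lt {F : ℝ → ℝ} {a : ℝ} (hc : ContinuousOn F (Ioi a))
    (hleft : ∀ x ∈ Ioi a, ∀ᶠ y in 𝓝[<] x, F y < F x)
    (hnear : ∀ᶠ x in 𝓝[>] a, 0 < F x) :
    ∀ x ∈ Ioi a, 0 < F x := by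
  intro v hv
  by_contra! hFv
  obtain ⟨b, hFb, hab, hbv⟩ := (hnear.and (Ioo_mem_nhdsGT hv)).exists
  set S := Icc b v ∩ F ⁻¹' Iic 0
  have hS : IsCompact S := isCompact_Icc.of_isClosed_subset
    ((hc.mono fun x hx => hab.trans_le hx.1).preimage_isClosed_of_isClosed
      isClosed_Icc isClosed_Iic)
    inter_subset_left
  obtain ⟨s, ⟨⟨hbs, hsv⟩, hFs⟩, hmin⟩ := hS.exists_isLeast ⟨v, ⟨hbv.le, le_rfl⟩, hFv⟩
  have hbs_lt : b < s := hbs.lt_of_ne (by rintro rfl; exact (not_le.2 hFb) hFs)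
  obtain ⟨y, hFy, hby, hys⟩ :=
    ((hleft s (hab.trans hbs_lt)).and (Ioo_mem_nhdsLT hbs_lt)).exists
  exact (not_le.2 hys) (hmin ⟨⟨hby.le, hys.le.trans hsv⟩, (hFy.trans_le hFs).le⟩)

theorem euclidean_profile_eq_rpow {c v : ℝ} (hc : 0 ≤ c) (hv : 0 ≤ v) :
    c ^ ((2 : ℝ) / 3) * (36 * π) ^ ((1 : ℝ) / 3) * v ^ ((2 : ℝ) / 3)
      = (6 * c * √π * v) ^ ((3 / 2 : ℝ)⁻¹) := by
  have h36 : √36 = 6 := by rw [show (36 : ℝ) = 6 ^ 2 by norm_num, sqrt_sq (by norm_num)]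
  have : 6 * c * √π * v = c * √(36 * π) * v := by rw [sqrt_mul (by norm_num), h36]; ring
  rw [this, sqrt_eq_rpow, mul_rpow (by positivity) hv, mul_rpow hc (by positivity),
    ← rpow_mul (by positivity)]
  norm_num

theorem six_mul_sqrt_pi_lt_of_lt_mul_sqrt {c y y' : ℝ} (hy : 0 < y)
    (hlt : c * √(16 * π / y) < y') : 6 * c * √π < y' * (3 / 2) * y ^ ((3 / 2 : ℝ) - 1) := by
  have h16 : √16 = 4 := by rw [show (16 : ℝ) = 4 ^ 2 by norm_num, sqrt_sq (by norm_num)]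
  have hsqrt : √y * √(16 * π / y) = 4 * √π := by
    rw [← sqrt_mul hy.le, mul_div_cancel₀ _ hy.ne', sqrt_mul (by norm_num), h16]
  have hpow : y ^ ((3 / 2 : ℝ) - 1) = √y := by rw [sqrt_eq_rpow]; norm_num
  calc 6 * c * √π = 3 / 2 * √y * (c * √(16 * π / y)) := by
        linear_combination (-(3 / 2) * c) * hsqrt
    _ < 3 / 2 * √y * y' := by gcongr
    _ = y' * (3 / 2) * y ^ ((3 / 2 : ℝ) - 1) := by rw [hpow]; ring

theorem stmt7_general (ε : ℝ) (hε' : ε < 1 / 2)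
    (I I' : ℝ → ℝ)
    (hcont : ContinuousOn I (Set.Ioi 0))
    (hpos : ∀ v, 0 < v → 0 < I v)
    (hderiv : ∀ v, 0 < v → HasDerivWithinAt I (I' v) (Set.Iic v) v)
    (hineq : ∀ v, 0 < v → (1 - 2 * ε) * Real.sqrt (16 * π / I v) < I' v)
    (hsmall : ∀ᶠ v in nhdsWithin 0 (Set.Ioi 0),
      (1 - 2 * ε) ^ ((2 : ℝ) / 3) * (36 * π) ^ ((1 : ℝ) / 3) * v ^ ((2 : ℝ) / 3) < I v) :
    ∀ v, 0 < v →
      (1 - 2 * ε) ^ ((2 : ℝ) / 3) * (36 * π) ^ ((1 : ℝ) / 3) * v ^ ((2 : ℝ) / 3) ≤ I v := by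
  set c := 1 - 2 * ε
  have hc : 0 ≤ c := by linarith
  have hprofile_lt {v : ℝ} (hv : 0 < v) :
      c ^ ((2 : ℝ) / 3) * (36 * π) ^ ((1 : ℝ) / 3) * v ^ ((2 : ℝ) / 3) < I v ↔
        0 < I v ^ (3 / 2 : ℝ) - 6 * c * √π * v := by
    rw [euclidean_profile_eq_rpow hc hv.le, rpow_inv_lt_iff_of_pos (by positivity)
      (hpos v hv).le (by norm_num), sub_pos]
  have hleft : ∀ v ∈ Ioi (0 : ℝ), ∀ᶠ y in 𝓝[<] v,
      I y ^ (3 / 2 : ℝ) - 6 * c * √π * y < I v ^ (3 / 2 : ℝ) - 6 * c * √π * v :=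
    fun v hv =>
      (((hderiv v hv).rpow_const (.inl (hpos v hv).ne')).sub
        ((hasDerivWithinAt_id v _).const_mul (6 * c * √π))).eventually_lt_of_Iic_of_pos
        (by simpa using six_mul_sqrt_pi_lt_of_lt_mul_sqrt (hpos v hv) (hineq v hv))
  have hcont_comp : ContinuousOn (fun v => I v ^ (3 / 2 : ℝ) - 6 * c * √π * v) (Ioi 0) :=
    (hcont.rpow_const fun _ _ => .inr (by norm_num)).sub (continuousOn_const.mul continuousOn_id)
  have hcomp := pos_of_forall_eventually_nhdsLT_lt hcont_comp hleft <| by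
    filter_upwards [hsmall, self_mem_nhdsWithin] with v hv hv0 using (hprofile_lt hv0).1 hv
  exact fun v hv => ((hprofile_lt hv).2 (hcomp v hv)).le

/-- ODE comparison for the isoperimetric profile: if `I` is continuous, increasing,
positive, its left derivative satisfies `I'₋(v) > (1−2ε)√(16π/I(v))` for all `v > 0`,
and `I(v) > (1−2ε)^{2/3}(36π)^{1/3}v^{2/3}` for all small `v > 0`, then
`I(v) ≥ (1−2ε)^{2/3}(36π)^{1/3}v^{2/3}` for all `v > 0`. -/
theorem stmt7 (ε : ℝ) (hε : 0 ≤ ε) (hε' : ε < 1 / 2)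
    (I I' : ℝ → ℝ)
    (hcont : ContinuousOn I (Set.Ioi 0))
    (hmono : MonotoneOn I (Set.Ioi 0))
    (hpos : ∀ v, 0 < v → 0 < I v)
    (hderiv : ∀ v, 0 < v → HasDerivWithinAt I (I' v) (Set.Iic v) v)
    (hineq : ∀ v, 0 < v → (1 - 2 * ε) * Real.sqrt (16 * π / I v) < I' v)
    (hsmall : ∀ᶠ v in nhdsWithin 0 (Set.Ioi 0),
      (1 - 2 * ε) ^ ((2 : ℝ) / 3) * (36 * π) ^ ((1 : ℝ) / 3) * v ^ ((2 : ℝ) / 3) < I v) :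
    ∀ v, 0 < v →
      (1 - 2 * ε) ^ ((2 : ℝ) / 3) * (36 * π) ^ ((1 : ℝ) / 3) * v ^ ((2 : ℝ) / 3) ≤ I v :=
  stmt7_general ε hε' I I' hcont hpos hderiv hineq hsmall
end
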